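/- If a labeled graph G = ({1,…,n}, E) is 12-representable, U is a cutset of G, and G₁ = (V₁,E₁), G₂ = (V₂,E₂) are two distinct connected components of G ∖ U each with at least 2 vertices, with the smallest element of V₁ ∪ V₂ lying in V₁, then every element of V₁ is smaller than every element of V₂. -/

import Mathlib

/-- A word has no 12-match iff no two consecutive letters form a strictly
increasing pair, i.e. the word is weakly decreasing at each step. -/
def NoMatch12 (w : List ℕ) : Prop := w.Chain' (fun a b => b ≤ a)

/-- `w` 12-represents the labeled graph with vertex set `V ⊂ ℕ` and edge relation
`E`: every vertex occurs in `w`, all letters of `w` are vertices, and for all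
distinct vertices `x, y`: `xy` is an edge iff the subsequence of `w` consisting of
occurrences of `x` and `y` has no 12-match. -/
def Rep12 (V : Finset ℕ) (E : ℕ → ℕ → Prop) (w : List ℕ) : Prop :=
  (∀ v ∈ V, v ∈ w) ∧ (∀ a ∈ w, a ∈ V) ∧
    ∀ x ∈ V, ∀ y ∈ V, x ≠ y →
      (E x y ↔ NoMatch12 (w.filter (fun a => a = x ∨ a = y)))


/-!
In a 12-representing word, two vertices `x < y` are adjacent iff no occurrence of `x` precedes an
occurrence of `y`. Given non-adjacent pairs `p < q` and `r < u`, cutting the word between an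
occurrence of `p` before `q` and one of `r` before `u` shows that `p` precedes `u` or `r` precedes
`q`; so two edges `pu`, `rq` force one of the edges `pq`, `ru`.

If some `b ∈ V₂` were smaller than some `a ∈ V₁`, a path inside `V₁` from its minimum to `a` would
contain an edge `xy` with `x < b < y`, and `b` has a neighbour `c` in the component `V₂`. Whichever
side of `b` the vertex `c` lies on, the edges `xy` and `bc` would force an edge between the two
components.
-/

open List

namespace List

variable {α : Type*}

theorem pair_sublist_iff {x y : α} {w : List α} :
    [x, y] <+ w ↔ ∃ s t, w = s ++ t ∧ x ∈ s ∧ y ∈ t := by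
  rw [cons_sublist_iff]
  simp only [singleton_sublist]

theorem pair_sublist_or_pair_sublist {w : List α} {p q r u : α}
    (hpq : [p, q] <+ w) (hru : [r, u] <+ w) : [p, u] <+ w ∨ [r, q] <+ w := by
  obtain ⟨s, t, hw, hp, hq⟩ := pair_sublist_iff.mp hpq
  obtain ⟨s', t', hw', hr, hu⟩ := pair_sublist_iff.mp hru
  rcases prefix_or_prefix_of_prefix ⟨t, hw.symm⟩ ⟨t', hw'.symm⟩ with h | h
  · exact Or.inl (pair_sublist_iff.mpr ⟨s', t', hw', h.subset hp, hu⟩)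
  · exact Or.inr (pair_sublist_iff.mpr ⟨s, t, hw, h.subset hr, hq⟩)

end List

namespace Relation.ReflTransGen

variable {α : Type*} {R : α → α → Prop}

theorem exists_rel_lt_lt [LinearOrder α] {m a b : α} (h : ReflTransGen R m a) (hm : m < b)
    (hb : b < a) (hR : ∀ x y, R x y → x ≠ b) : ∃ x y, R x y ∧ x < b ∧ b < y := by
  induction h with
  | refl => exact absurd (hm.trans hb) (lt_irrefl m)
  | @tail c v _ hcv ih =>
    rcases lt_or_ge b c with hbc | hcb
    · exact ih hbc
    · exact ⟨c, v, hcv, lt_of_le_of_ne hcb (hR c v hcv), hb⟩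

theorem exists_ne_rel_of_ne {a v : α} (h : ReflTransGen R a v) (hv : v ≠ a) :
    ∃ c, c ≠ a ∧ R a c := by
  induction h with
  | refl => exact absurd rfl hv
  | @tail p v _ hpv ih =>
    by_cases hp : p = a
    · exact ⟨v, hv, hp ▸ hpv⟩
    · exact ih hp

end Relation.ReflTransGen

theorem noMatch12_filter_iff {x y : ℕ} (hxy : x < y) (w : List ℕ) :
    NoMatch12 (w.filter (fun a => a = x ∨ a = y)) ↔ ¬ [x, y] <+ w := by
  refine (List.isChain_iff_pairwise (R := (· ≥ ·))).trans ?_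
  rw [List.pairwise_iff_forall_sublist]
  constructor
  · intro h hxyw
    have : [x, y] <+ w.filter (fun a => a = x ∨ a = y) := by
      simpa using hxyw.filter (fun a => decide (a = x ∨ a = y))
    exact absurd (h this) (not_le.mpr hxy)
  · intro h a b hab
    have ha := hab.subset (List.mem_cons_self ..)
    have hb := hab.subset (List.mem_cons_of_mem _ (List.mem_singleton_self b))
    simp only [List.mem_filter, decide_eq_true_eq] at ha hb
    rcases ha.2 with rfl | rfl <;> rcases hb.2 with rfl | rfl
    · exact le_rfl
    · exact absurd (hab.trans List.filter_sublist) h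
    · exact hxy.le
    · exact le_rfl

namespace Rep12

variable {V : Finset ℕ} {E : ℕ → ℕ → Prop} {w : List ℕ}

theorem adj_comm (h : Rep12 V E w) {x y : ℕ} (hx : x ∈ V) (hy : y ∈ V) (hxy : x ≠ y) :
    E x y ↔ E y x := by
  rw [h.2.2 x hx y hy hxy, h.2.2 y hy x hx hxy.symm]
  simp only [or_comm]

theorem adj_iff_not_sublist (h : Rep12 V E w) {x y : ℕ} (hx : x ∈ V) (hy : y ∈ V)
    (hxy : x < y) : E x y ↔ ¬ [x, y] <+ w := by
  rw [h.2.2 x hx y hy hxy.ne, noMatch12_filter_iff hxy]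

theorem adj_or_adj_of_adj_of_adj (h : Rep12 V E w) {p q r u : ℕ} (hp : p ∈ V) (hq : q ∈ V)
    (hr : r ∈ V) (hu : u ∈ V) (hpq : p < q) (hru : r < u) (hpu : p < u) (hrq : r < q)
    (hEpu : E p u) (hErq : E r q) : E p q ∨ E r u := by
  by_contra! hnon
  rw [h.adj_iff_not_sublist hp hq hpq, h.adj_iff_not_sublist hr hu hru, not_not, not_not]
    at hnon
  rcases List.pair_sublist_or_pair_sublist hnon.1 hnon.2 with hsub | hsub
  · exact (h.adj_iff_not_sublist hp hu hpu).mp hEpu hsub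
  · exact (h.adj_iff_not_sublist hr hq hrq).mp hErq hsub

theorem adj_of_adj_of_lt_of_lt (h : Rep12 V E w) {x y b c : ℕ} (hx : x ∈ V) (hy : y ∈ V)
    (hb : b ∈ V) (hc : c ∈ V) (hxb : x < b) (hby : b < y) (hbc : b ≠ c) (hExy : E x y)
    (hEbc : E b c) : E x b ∨ E x c ∨ E b y ∨ E c y := by
  rcases lt_or_gt_of_ne hbc with hbc | hcb
  · have := h.adj_or_adj_of_adj_of_adj hx hc hb hy (hxb.trans hbc) hby (hxb.trans hby) hbc
      hExy hEbc
    tauto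
  · have hEcb := (h.adj_comm hb hc hbc).mp hEbc
    have := h.adj_or_adj_of_adj_of_adj hx hb hc hy hxb (hcb.trans hby) (hxb.trans hby) hcb
      hExy hEcb
    tauto

end Rep12

theorem stmt_19_general (n : ℕ) (E : ℕ → ℕ → Prop)
    (hrep : ∃ w, Rep12 (Finset.Icc 1 n) E w)
    (U V₁ V₂ : Finset ℕ)
    (hV₁ : V₁ ⊆ Finset.Icc 1 n) (hV₂ : V₂ ⊆ Finset.Icc 1 n)
    (hdU₂ : Disjoint V₂ U) (hd : Disjoint V₁ V₂)
    (hconn₁ : ∀ a ∈ V₁, ∀ b ∈ V₁,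
      Relation.ReflTransGen (fun p q => E p q ∧ p ∈ V₁ ∧ q ∈ V₁) a b)
    (hconn₂ : ∀ a ∈ V₂, ∀ b ∈ V₂,
      Relation.ReflTransGen (fun p q => E p q ∧ p ∈ V₂ ∧ q ∈ V₂) a b)
    (hclosed₁ : ∀ a ∈ V₁, ∀ b ∈ Finset.Icc 1 n, b ∉ U → E a b → b ∈ V₁)
    (hc₂ : 2 ≤ V₂.card)
    (hmin : ∃ a ∈ V₁, ∀ b ∈ V₁ ∪ V₂, a ≤ b) :
    ∀ a ∈ V₁, ∀ b ∈ V₂, a < b := by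
  obtain ⟨w, hw⟩ := hrep
  have hne := Finset.disjoint_iff_ne.mp hd
  have hnadj : ∀ u ∈ V₁, ∀ v ∈ V₂, ¬ E u v ∧ ¬ E v u := by
    intro u hu v hv
    have hEuv : ¬ E u v := fun h =>
      Finset.disjoint_left.mp hd (hclosed₁ u hu v (hV₂ hv) (Finset.disjoint_left.mp hdU₂ hv) h) hv
    exact ⟨hEuv, (hw.adj_comm (hV₁ hu) (hV₂ hv) (hne u hu v hv)).not.mp hEuv⟩
  intro a ha b hb
  by_contra! hba
  obtain ⟨m, hm, hm_le⟩ := hmin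
  have hmb : m < b := lt_of_le_of_ne (hm_le b (Finset.mem_union_right _ hb)) (hne m hm b hb)
  obtain ⟨x, y, ⟨hExy, hx, hy⟩, hxb, hby⟩ := (hconn₁ m hm a ha).exists_rel_lt_lt hmb
    (lt_of_le_of_ne hba (hne a ha b hb).symm) fun x _ hx => hne x hx.2.1 b hb
  obtain ⟨b', hb', hb'b⟩ := Finset.exists_mem_ne hc₂ b
  obtain ⟨c, hcb, hEbc, -, hc⟩ := (hconn₂ b hb b' hb').exists_ne_rel_of_ne hb'b
  rcases hw.adj_of_adj_of_lt_of_lt (hV₁ hx) (hV₁ hy) (hV₂ hb) (hV₂ hc) hxb hby hcb.symm hExy hEbc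
    with h | h | h | h
  · exact (hnadj x hx b hb).1 h
  · exact (hnadj x hx c hc).1 h
  · exact (hnadj y hy b hb).2 h
  · exact (hnadj y hy c hc).2 h

/-- if `G` on `{1,…,n}` is 12-representable, `U` is a cutset, and
`V₁`, `V₂` are two distinct connected components of `G ∖ U` (each connected,
closed under edges of `G ∖ U`, disjoint) with at least 2 vertices each, and the
smallest element of `V₁ ∪ V₂` lies in `V₁`, then every element of `V₁` is smaller
than every element of `V₂`. -/
theorem stmt_19 (n : ℕ) (E : ℕ → ℕ → Prop) (hsym : Symmetric E)
    (hrep : ∃ w, Rep12 (Finset.Icc 1 n) E w)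
    (U V₁ V₂ : Finset ℕ)
    (hU : U ⊆ Finset.Icc 1 n)
    (hV₁ : V₁ ⊆ Finset.Icc 1 n) (hV₂ : V₂ ⊆ Finset.Icc 1 n)
    (hdU₁ : Disjoint V₁ U) (hdU₂ : Disjoint V₂ U) (hd : Disjoint V₁ V₂)
    (hconn₁ : ∀ a ∈ V₁, ∀ b ∈ V₁,
      Relation.ReflTransGen (fun p q => E p q ∧ p ∈ V₁ ∧ q ∈ V₁) a b)
    (hconn₂ : ∀ a ∈ V₂, ∀ b ∈ V₂,
      Relation.ReflTransGen (fun p q => E p q ∧ p ∈ V₂ ∧ q ∈ V₂) a b)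
    (hclosed₁ : ∀ a ∈ V₁, ∀ b ∈ Finset.Icc 1 n, b ∉ U → E a b → b ∈ V₁)
    (hclosed₂ : ∀ a ∈ V₂, ∀ b ∈ Finset.Icc 1 n, b ∉ U → E a b → b ∈ V₂)
    (hc₁ : 2 ≤ V₁.card) (hc₂ : 2 ≤ V₂.card)
    (hmin : ∃ a ∈ V₁, ∀ b ∈ V₁ ∪ V₂, a ≤ b) :
    ∀ a ∈ V₁, ∀ b ∈ V₂, a < b :=
  stmt_19_general n E hrep U V₁ V₂ hV₁ hV₂ hdU₂ hd hconn₁ hconn₂ hclosed₁ hc₂ hmin
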